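/- Let w = (w_j)_{j=1}^N be weights with w_j ≥ 1 for all j, and let k > 0. Suppose A ∈ ℝ^{m×N} has the weighted robust null space property over ℝ of order (k,w) with constants 0 ≤ ρ < 1 and γ > 0, and let A′ ∈ ℝ^{m×N} satisfy ‖A − A′‖₂ ≤ δ̃ (operator norm ℓ² → ℓ²) where γ·δ̃ < 1. Then A′ has the weighted robust null space property over ℝ of order (k,w) with constants ρ′ = (ρ + γ·δ̃·√k)/(1 − γ·δ̃) and γ′ = γ/(1 − γ·δ̃); that is, for every x ∈ ℝ^N and every S ⊆ {1,…,N} with |S|_w ≤ k, ‖x_S‖₂ ≤ (ρ′/√k)·‖x_{S^c}‖_{1,w} + γ′·‖A′x‖₂. -/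

import Mathlib

open Finset

/-- The ℓ²-norm `‖x‖_{2;V}` of a tuple `x ∈ V^N`. -/
noncomputable def norm2V {V : Type*} [NormedAddCommGroup V] {N : ℕ} (x : Fin N → V) : ℝ :=
  Real.sqrt (∑ j, ‖x j‖ ^ 2)

/-- The weighted ℓ¹-norm `‖x‖_{1,w;V}` of a tuple `x ∈ V^N`. -/
noncomputable def norm1wV {V : Type*} [NormedAddCommGroup V] {N : ℕ} (w : Fin N → ℝ)
    (x : Fin N → V) : ℝ :=
  ∑ j, w j * ‖x j‖

/-- The action of a matrix `A ∈ ℝ^{m×N}` on `V^N`, giving an element of `V^m`. -/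
noncomputable def matVec {V : Type*} [NormedAddCommGroup V] [NormedSpace ℝ V] {m N : ℕ}
    (A : Matrix (Fin m) (Fin N) ℝ) (x : Fin N → V) : Fin m → V :=
  fun i => ∑ j, A i j • x j

/-- `x_S`: the vector agreeing with `x` on `S` and vanishing outside `S`. -/
noncomputable def restrictTo {V : Type*} [NormedAddCommGroup V] {N : ℕ} (x : Fin N → V)
    (S : Finset (Fin N)) : Fin N → V :=
  fun j => if j ∈ S then x j else 0

/-- The weighted cardinality `|S|_w = Σ_{j∈S} w_j²`. -/
def wCard {N : ℕ} (w : Fin N → ℝ) (S : Finset (Fin N)) : ℝ :=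
  ∑ j ∈ S, w j ^ 2

/-- `A` has the weighted robust null space property over the subset `W ⊆ V`
of order `(k, w)` with constants `ρ` and `γ`. -/
def WRNSP {V : Type*} [NormedAddCommGroup V] [NormedSpace ℝ V] {m N : ℕ}
    (A : Matrix (Fin m) (Fin N) ℝ) (W : Set V) (k : ℝ) (w : Fin N → ℝ) (ρ γ : ℝ) : Prop :=
  ∀ x : Fin N → V, (∀ j, x j ∈ W) → ∀ S : Finset (Fin N), wCard w S ≤ k →
    norm2V (restrictTo x S) ≤
      ρ / Real.sqrt k * norm1wV w (restrictTo x Sᶜ) + γ * norm2V (matVec A x)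

/-- The weighted best `(k,w)`-term approximation error `σ_k(x)_{1,w;V}`. -/
noncomputable def sigmaK {V : Type*} [NormedAddCommGroup V] {N : ℕ} (w : Fin N → ℝ) (k : ℝ)
    (x : Fin N → V) : ℝ :=
  sInf {t : ℝ | ∃ S : Finset (Fin N), wCard w S ≤ k ∧ t = norm1wV w (restrictTo x Sᶜ)}

/-! Splitting `A x = A′ x + (A − A′) x` gives `‖A x‖₂ ≤ ‖A′ x‖₂ + δ̃ ‖x‖₂`, and
`‖x‖₂ ≤ ‖x_S‖₂ + ‖x_{Sᶜ}‖_{1,w}` because `w ≥ 1`. Inserting both into the robust null space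
property of `A` yields `(1 − γδ̃) ‖x_S‖₂ ≤ (ρ/√k + γδ̃) ‖x_{Sᶜ}‖_{1,w} + γ ‖A′ x‖₂`; dividing
by `1 − γδ̃ > 0` gives the claim. -/

section Norms

variable {V : Type*} [NormedAddCommGroup V] {N : ℕ}

lemma norm2V_eq_norm_toLp (x : Fin N → V) :
    norm2V x = ‖WithLp.toLp 2 x‖ := by
  rw [PiLp.norm_eq_of_L2]
  rfl

lemma norm2V_nonneg (x : Fin N → V) : 0 ≤ norm2V x := Real.sqrt_nonneg _

lemma norm2V_add_le (x y : Fin N → V) : norm2V (x + y) ≤ norm2V x + norm2V y := by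
  simpa only [norm2V_eq_norm_toLp, WithLp.toLp_add] using norm_add_le _ _

lemma norm2V_pos {x : Fin N → V} (hx : x ≠ 0) : 0 < norm2V x := by
  rw [norm2V_eq_norm_toLp, norm_pos_iff]
  exact fun h => hx (WithLp.toLp_injective 2 (by simpa using h))

lemma norm2V_le_norm1wV {w : Fin N → ℝ} (hw : ∀ j, 1 ≤ w j) (x : Fin N → V) :
    norm2V x ≤ norm1wV w x :=
  calc norm2V x ≤ Real.sqrt ((∑ j, ‖x j‖) ^ 2) :=
        Real.sqrt_le_sqrt (sum_sq_le_sq_sum_of_nonneg fun _ _ => norm_nonneg _)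
    _ = ∑ j, ‖x j‖ := Real.sqrt_sq (sum_nonneg fun _ _ => norm_nonneg _)
    _ ≤ norm1wV w x := sum_le_sum fun j _ => le_mul_of_one_le_left (norm_nonneg _) (hw j)

lemma restrictTo_add_restrictTo_compl (x : Fin N → V) (S : Finset (Fin N)) :
    restrictTo x S + restrictTo x Sᶜ = x := by
  ext j
  by_cases hj : j ∈ S <;> simp [restrictTo, hj]

end Norms

lemma matVec_sub {V : Type*} [NormedAddCommGroup V] [NormedSpace ℝ V] {m N : ℕ}
    (A B : Matrix (Fin m) (Fin N) ℝ) (x : Fin N → V) :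
    matVec (A - B) x = matVec A x - matVec B x := by
  ext i
  simp only [matVec, Matrix.sub_apply, sub_smul, sum_sub_distrib, Pi.sub_apply]

theorem WRNSP.of_perturbation {V : Type*} [NormedAddCommGroup V] [NormedSpace ℝ V] {m N : ℕ}
    {A A' : Matrix (Fin m) (Fin N) ℝ} {W : Set V} {k : ℝ} {w : Fin N → ℝ} {ρ γ dt : ℝ}
    (hw : ∀ j, 1 ≤ w j) (hk : 0 < k) (hγ : 0 ≤ γ) (hA : WRNSP A W k w ρ γ)
    (hpert : ∀ x : Fin N → V, (∀ j, x j ∈ W) → norm2V (matVec (A - A') x) ≤ dt * norm2V x)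
    (hdt : γ * dt < 1) :
    WRNSP A' W k w ((ρ + γ * dt * Real.sqrt k) / (1 - γ * dt)) (γ / (1 - γ * dt)) := by
  intro x hxW S hS
  rcases eq_or_ne x 0 with rfl | hx
  · simp [restrictTo, norm2V, norm1wV, matVec]
  have hdt0 : 0 ≤ dt :=
    nonneg_of_mul_nonneg_left ((norm2V_nonneg _).trans (hpert x hxW)) (norm2V_pos hx)
  set a := norm2V (restrictTo x S)
  set b := norm1wV w (restrictTo x Sᶜ)
  set c := norm2V (matVec A' x)
  have hx_le : norm2V x ≤ a + b := by
    calc norm2V x = norm2V (restrictTo x S + restrictTo x Sᶜ) := by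
          rw [restrictTo_add_restrictTo_compl]
      _ ≤ a + norm2V (restrictTo x Sᶜ) := norm2V_add_le _ _
      _ ≤ a + b := by gcongr; exact norm2V_le_norm1wV hw _
  have hAx_le : norm2V (matVec A x) ≤ c + dt * (a + b) := by
    calc norm2V (matVec A x) = norm2V (matVec A' x + matVec (A - A') x) := by
          rw [matVec_sub, add_sub_cancel]
      _ ≤ c + norm2V (matVec (A - A') x) := norm2V_add_le _ _
      _ ≤ c + dt * norm2V x := by gcongr; exact hpert x hxW
      _ ≤ c + dt * (a + b) := by gcongr
  have hsk : 0 < Real.sqrt k := Real.sqrt_pos.mpr hk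
  have hden : 0 < 1 - γ * dt := sub_pos.mpr hdt
  have key : (1 - γ * dt) * a ≤ (ρ / Real.sqrt k + γ * dt) * b + γ * c := by
    linarith [hA x hxW S hS, mul_le_mul_of_nonneg_left hAx_le hγ]
  rw [show (ρ + γ * dt * Real.sqrt k) / (1 - γ * dt) / Real.sqrt k
      = (ρ / Real.sqrt k + γ * dt) / (1 - γ * dt) by field_simp,
    div_mul_eq_mul_div, div_mul_eq_mul_div, ← add_div, le_div_iff₀ hden]
  linarith

theorem wrNSP_perturbation_general
    {m N : ℕ} (A A' : Matrix (Fin m) (Fin N) ℝ)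
    (w : Fin N → ℝ) (hw : ∀ j, 1 ≤ w j)
    (k : ℝ) (hk : 0 < k)
    (ρ γ : ℝ) (hγ : 0 < γ)
    (hA : WRNSP A (Set.univ : Set ℝ) k w ρ γ)
    (dt : ℝ) (hpert : ∀ x : Fin N → ℝ, norm2V (matVec (A - A') x) ≤ dt * norm2V x)
    (hdt : γ * dt < 1) :
    WRNSP A' (Set.univ : Set ℝ) k w ((ρ + γ * dt * Real.sqrt k) / (1 - γ * dt))
      (γ / (1 - γ * dt)) :=
  hA.of_perturbation hw hk hγ.le (fun x _ => hpert x) hdt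

/-- Perturbation of the weighted rNSP over `ℝ`: if `A` has the weighted rNSP of order `(k,w)`
with constants `0 ≤ ρ < 1`, `γ > 0`, and `‖A − A′‖₂ ≤ δ̃` (as an operator `ℓ² → ℓ²`) with
`γ·δ̃ < 1`, then `A′` has the weighted rNSP of order `(k,w)` with constants
`ρ′ = (ρ + γ·δ̃·√k)/(1 − γ·δ̃)` and `γ′ = γ/(1 − γ·δ̃)`. -/
theorem wrNSP_perturbation
    {m N : ℕ} (A A' : Matrix (Fin m) (Fin N) ℝ)
    (w : Fin N → ℝ) (hw : ∀ j, 1 ≤ w j)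
    (k : ℝ) (hk : 0 < k)
    (ρ γ : ℝ) (hρ0 : 0 ≤ ρ) (hρ1 : ρ < 1) (hγ : 0 < γ)
    (hA : WRNSP A (Set.univ : Set ℝ) k w ρ γ)
    (dt : ℝ) (hpert : ∀ x : Fin N → ℝ, norm2V (matVec (A - A') x) ≤ dt * norm2V x)
    (hdt : γ * dt < 1) :
    WRNSP A' (Set.univ : Set ℝ) k w ((ρ + γ * dt * Real.sqrt k) / (1 - γ * dt))
      (γ / (1 - γ * dt)) :=
  wrNSP_perturbation_general A A' w hw k hk ρ γ hγ hA dt hpert hdt
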